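/- arXiv:2001.01762 — 2 statements merged into one kernel-verified Lean document; each statement's English description precedes it below -/
import Mathlib

section
/- Let (E₁, h₁) and (E₂, h₂) be Hermitian holomorphic vector bundles over a complex manifold X. If both are Nakano semipositive, then the tensor product (E₁ ⊗ E₂, h₁ ⊗ h₂) is Nakano semipositive; if both are Nakano positive, so is the tensor product. -/
/-- The Nakano quadratic form `∑ c_{jkαβ} u_{jα} \bar{u}_{kβ}` of a curvature
coefficient array, evaluated on an element `u` of `T_x X ⊗ E_x` in coordinates. -/
noncomputable def NakanoForm {n : ℕ} {ι : Type*} [Fintype ι]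
    (c : Fin n → Fin n → ι → ι → ℂ) (u : Fin n → ι → ℂ) : ℂ :=
  ∑ j, ∑ k, ∑ a, ∑ b, c j k a b * u j a * star (u k b)

def IsHermitianArray {n : ℕ} {ι : Type*} (c : Fin n → Fin n → ι → ι → ℂ) : Prop :=
  ∀ j k a b, star (c j k a b) = c k j b a

def NakanoSemipos {n : ℕ} {ι : Type*} [Fintype ι]
    (c : Fin n → Fin n → ι → ι → ℂ) : Prop :=
  ∀ u : Fin n → ι → ℂ, 0 ≤ (NakanoForm c u).re

def NakanoPos {n : ℕ} {ι : Type*} [Fintype ι]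
    (c : Fin n → Fin n → ι → ι → ℂ) : Prop :=
  ∀ u : Fin n → ι → ℂ, u ≠ 0 → 0 < (NakanoForm c u).re

/-- The curvature array of a tensor product: `Θ₁ ⊗ Id + Id ⊗ Θ₂`. -/
def tensorCurvature {n r₁ r₂ : ℕ}
    (c₁ : Fin n → Fin n → Fin r₁ → Fin r₁ → ℂ)
    (c₂ : Fin n → Fin n → Fin r₂ → Fin r₂ → ℂ) :
    Fin n → Fin n → (Fin r₁ × Fin r₂) → (Fin r₁ × Fin r₂) → ℂ :=
  fun j k a b =>
    c₁ j k a.1 b.1 * (if a.2 = b.2 then 1 else 0) +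
      (if a.1 = b.1 then 1 else 0) * c₂ j k a.2 b.2

lemma nakano_inner_eq {n r₁ r₂ : ℕ}
    (c₁ : Fin n → Fin n → Fin r₁ → Fin r₁ → ℂ)
    (c₂ : Fin n → Fin n → Fin r₂ → Fin r₂ → ℂ)
    (u : Fin n → Fin r₁ × Fin r₂ → ℂ) (j k : Fin n) :
    ∑ a, ∑ b, tensorCurvature c₁ c₂ j k a b * u j a * star (u k b) =
      (∑ t : Fin r₂, ∑ a, ∑ b, c₁ j k a b * u j (a, t) * star (u k (b, t))) +
        ∑ s : Fin r₁, ∑ a, ∑ b, c₂ j k a b * u j (s, a) * star (u k (s, b)) := by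
  unfold tensorCurvature
  simp only [Fintype.sum_prod_type, add_mul, mul_ite, ite_mul, one_mul, zero_mul,
    mul_one, mul_zero, Finset.sum_add_distrib, Finset.sum_ite_eq, Finset.sum_ite_eq',
    Finset.mem_univ, if_true]
  congr 1
  · rw [Finset.sum_comm]
  · refine Finset.sum_congr rfl fun s _ => Finset.sum_congr rfl fun a _ => ?_
    rw [Finset.sum_comm]
    simp

lemma sum_rotate {α β γ M : Type*} [Fintype α] [Fintype β] [Fintype γ]
    [AddCommMonoid M] (f : α → β → γ → M) :
    ∑ j, ∑ k, ∑ t, f j k t = ∑ t, ∑ j, ∑ k, f j k t := by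
  rw [show (∑ j, ∑ k, ∑ t, f j k t) = ∑ j, ∑ t, ∑ k, f j k t from
    Finset.sum_congr rfl fun j _ => Finset.sum_comm, Finset.sum_comm]

lemma nakanoForm_tensor {n r₁ r₂ : ℕ}
    (c₁ : Fin n → Fin n → Fin r₁ → Fin r₁ → ℂ)
    (c₂ : Fin n → Fin n → Fin r₂ → Fin r₂ → ℂ)
    (u : Fin n → Fin r₁ × Fin r₂ → ℂ) :
    NakanoForm (tensorCurvature c₁ c₂) u =
      (∑ t : Fin r₂, NakanoForm c₁ (fun j a => u j (a, t))) +
        ∑ s : Fin r₁, NakanoForm c₂ (fun j a => u j (s, a)) := by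
  unfold NakanoForm
  calc ∑ j, ∑ k, ∑ a, ∑ b, tensorCurvature c₁ c₂ j k a b * u j a * star (u k b)
      = ∑ j, ∑ k, ((∑ t : Fin r₂, ∑ a, ∑ b, c₁ j k a b * u j (a, t) * star (u k (b, t))) +
          ∑ s : Fin r₁, ∑ a, ∑ b, c₂ j k a b * u j (s, a) * star (u k (s, b))) := by
        exact Finset.sum_congr rfl fun j _ => Finset.sum_congr rfl fun k _ =>
          nakano_inner_eq c₁ c₂ u j k
    _ = _ := by
        simp only [Finset.sum_add_distrib]
        congr 1
        · exact sum_rotate _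
        · exact sum_rotate _

lemma nakanoPos_slice_nonneg {n : ℕ} {ι : Type*} [Fintype ι]
    {c : Fin n → Fin n → ι → ι → ℂ} (hp : NakanoPos c) (v : Fin n → ι → ℂ) :
    0 ≤ (NakanoForm c v).re := by
  by_cases hv : v = 0
  · subst hv
    simp [NakanoForm]
  · exact le_of_lt (hp v hv)

/-- if `(E₁,h₁)` and `(E₂,h₂)` are Nakano semipositive at every point of `X`
then so is `(E₁ ⊗ E₂, h₁ ⊗ h₂)`; likewise with "positive" in place of "semipositive".
(Stated pointwise, via the curvature coefficient arrays in local frames.) -/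
theorem nakano_tensor_product {X : Type*} {n r₁ r₂ : ℕ}
    (c₁ : X → Fin n → Fin n → Fin r₁ → Fin r₁ → ℂ)
    (c₂ : X → Fin n → Fin n → Fin r₂ → Fin r₂ → ℂ)
    (h₁ : ∀ x, IsHermitianArray (c₁ x)) (h₂ : ∀ x, IsHermitianArray (c₂ x)) :
    ((∀ x, NakanoSemipos (c₁ x)) → (∀ x, NakanoSemipos (c₂ x)) →
      ∀ x, NakanoSemipos (tensorCurvature (c₁ x) (c₂ x))) ∧
    ((∀ x, NakanoPos (c₁ x)) → (∀ x, NakanoPos (c₂ x)) →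
      ∀ x, NakanoPos (tensorCurvature (c₁ x) (c₂ x))) := by
  constructor
  · intro p₁ p₂ x u
    rw [nakanoForm_tensor]
    simp only [Complex.add_re, Complex.re_sum]
    have A : 0 ≤ ∑ t : Fin r₂, (NakanoForm (c₁ x) (fun j a => u j (a, t))).re :=
      Finset.sum_nonneg fun t _ => p₁ x _
    have B : 0 ≤ ∑ s : Fin r₁, (NakanoForm (c₂ x) (fun j a => u j (s, a))).re :=
      Finset.sum_nonneg fun s _ => p₂ x _
    linarith
  · intro p₁ p₂ x u hu
    rw [nakanoForm_tensor]
    simp only [Complex.add_re, Complex.re_sum]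
    -- find a nonzero entry
    have : ∃ j p, u j p ≠ 0 := by
      by_contra h
      push_neg at h
      exact hu (funext fun j => funext fun p => h j p)
    obtain ⟨j, ⟨s, t⟩, hst⟩ := this
    have hslice : (fun j a => u j (a, t)) ≠ 0 := by
      intro h
      exact hst (congrFun (congrFun h j) s)
    have A : 0 < ∑ t' : Fin r₂, (NakanoForm (c₁ x) (fun j a => u j (a, t'))).re :=
      Finset.sum_pos' (fun t' _ => nakanoPos_slice_nonneg (p₁ x) _) ⟨t, Finset.mem_univ t, p₁ x _ hslice⟩
    have hslice2 : (fun j a => u j (s, a)) ≠ 0 := by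
      intro h
      exact hst (congrFun (congrFun h j) t)
    have B : 0 < ∑ s' : Fin r₁, (NakanoForm (c₂ x) (fun j a => u j (s', a))).re :=
      Finset.sum_pos' (fun s' _ => nakanoPos_slice_nonneg (p₂ x) _) ⟨s, Finset.mem_univ s, p₂ x _ hslice2⟩
    linarith
end

section
/- Let H be a Hilbert space with orthonormal basis (e_λ), U ⊆ ℂⁿ open, and h : U → Herm(H) a smooth Hermitian metric on the trivial bundle U × H with h(0) = Id. Let h_j = (∂h/∂z_j)(0) for j = 1, …, n, and define modified frames ẽ_λ = e_λ − ∑_j z_j h_j(e_λ). Then the inner products satisfy (ẽ_λ, ẽ_μ)_z = δ_{λμ} + O(‖z‖²), with the implicit bound in O(‖z‖²) uniform in λ, μ. In particular, a smooth Hermitian metric on a Hilbert bundle agrees with a flat metric up to first order at any point. -/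
open scoped ComplexOrder

private theorem aux_ring {R : Type*} [Ring R] (A A' E : R) :
    (1 - A') * (1 + (A + A') + E) * (1 - A) - 1 =
      (1 - A') * E * (1 - A) +
        (A' * A - A' * (A + A') - (A + A') * A + A' * ((A + A') * A)) := by
  noncomm_ring

private theorem aux_bound {R : Type*} [NormedRing R] [StarRing R] [NormedStarGroup R]
    (A Ez : R) (a e : ℝ) (hA : ‖A‖ ≤ a) (hE : ‖Ez‖ ≤ e) (h1n : ‖(1 : R)‖ ≤ 1) :
    ‖(1 - star A) * (1 + (A + star A) + Ez) * (1 - A) - 1‖ ≤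
      (1 + a) * e * (1 + a) + 5 * (a * a) + 2 * (a * (a * a)) := by
  have nA' : ‖star A‖ ≤ a := by rw [norm_star]; exact hA
  have ha0 : 0 ≤ a := (norm_nonneg A).trans hA
  have he0 : 0 ≤ e := (norm_nonneg Ez).trans hE
  have t2 : ‖star A * A‖ ≤ a * a :=
    (norm_mul_le _ _).trans (mul_le_mul nA' hA (norm_nonneg _) ha0)
  have hAA : ‖A + star A‖ ≤ 2 * a := (norm_add_le _ _).trans (by linarith)
  have t3 : ‖star A * (A + star A)‖ ≤ a * (2 * a) :=
    (norm_mul_le _ _).trans (mul_le_mul nA' hAA (norm_nonneg _) ha0)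
  have t4 : ‖(A + star A) * A‖ ≤ (2 * a) * a :=
    (norm_mul_le _ _).trans (mul_le_mul hAA hA (norm_nonneg _) (by linarith))
  have t5 : ‖star A * ((A + star A) * A)‖ ≤ a * ((2 * a) * a) :=
    (norm_mul_le _ _).trans (mul_le_mul nA' t4 (norm_nonneg _) ha0)
  have hS : ‖1 - A‖ ≤ 1 + a := (norm_sub_le _ _).trans (by linarith)
  have hS' : ‖1 - star A‖ ≤ 1 + a := (norm_sub_le _ _).trans (by linarith)
  have t1 : ‖(1 - star A) * Ez * (1 - A)‖ ≤ (1 + a) * e * (1 + a) := by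
    refine (norm_mul_le _ _).trans ?_
    refine mul_le_mul ((norm_mul_le _ _).trans
      (mul_le_mul hS' hE (norm_nonneg _) (by linarith))) hS (norm_nonneg _) (by positivity)
  rw [aux_ring]
  refine (norm_add_le _ _).trans ?_
  have hmid : ‖star A * A - star A * (A + star A) - (A + star A) * A +
      star A * ((A + star A) * A)‖ ≤
      a * a + a * (2 * a) + (2 * a) * a + a * ((2 * a) * a) := by
    refine (norm_add_le _ _).trans ?_
    have := (norm_sub_le (star A * A - star A * (A + star A)) ((A + star A) * A)).trans
      (add_le_add ((norm_sub_le _ _).trans (add_le_add t2 t3)) t4)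
    linarith [t5, this]
  nlinarith [t1, hmid]

private theorem aux_real (c K w : ℝ) (hc0 : 0 ≤ c) (hK : 0 ≤ K) (hw : 0 ≤ w) (hw1 : w ≤ 1) :
    (1 + c * w) * (K * w ^ 2) * (1 + c * w) + 5 * ((c * w) * (c * w)) +
      2 * ((c * w) * ((c * w) * (c * w))) ≤ (K * (1 + c) ^ 2 + 5 * c ^ 2 + 2 * c ^ 3 + 1) * w ^ 2 := by
  have h1 : c * w ≤ c := by nlinarith
  have h2 : (1 + c * w) * (1 + c * w) ≤ (1 + c) * (1 + c) := by
    nlinarith [mul_nonneg (sub_nonneg.2 h1) (by positivity : (0:ℝ) ≤ 2 + c + c * w)]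
  have h3 : K * w ^ 2 * ((1 + c * w) * (1 + c * w)) ≤ K * w ^ 2 * ((1 + c) * (1 + c)) := by
    apply mul_le_mul_of_nonneg_left h2 (by positivity)
  have h4 : w ^ 3 ≤ w ^ 2 := by nlinarith
  have h5 : 2 * ((c * w) * ((c * w) * (c * w))) ≤ 2 * c ^ 3 * w ^ 2 := by nlinarith [pow_nonneg hc0 3, sq_nonneg w, mul_nonneg (pow_nonneg hc0 3) (sq_nonneg w)]
  nlinarith [h3, h5, sq_nonneg w]

private theorem aux_smul {F : Type*} [AddCommGroup F] [Module ℂ F] (z : ℂ) (P Q : F) :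
    z • ((1 / 2 : ℂ) • (P - Complex.I • Q)) + star z • ((1 / 2 : ℂ) • (P + Complex.I • Q))
      = (z.re : ℂ) • P + (z.im : ℂ) • Q := by
  simp only [smul_smul, smul_sub, smul_add]
  rw [show (star z : ℂ) = (starRingEnd ℂ) z from rfl]
  match_scalars <;> simp [Complex.ext_iff] <;> ring

private theorem aux_sum_apply {n : ℕ} (f : Fin n → EuclideanSpace ℂ (Fin n)) (i : Fin n) :
    (∑ j, f j) i = ∑ j, f j i := by
  classical
  have : ∀ (s : Finset (Fin n)), (∑ j ∈ s, f j) i = ∑ j ∈ s, f j i := by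
    intro s
    induction s using Finset.induction with
    | empty => rfl
    | @insert a s ha ih => rw [Finset.sum_insert ha, Finset.sum_insert ha, ← ih]; rfl
  exact this _

set_option maxHeartbeats 2000000 in
/-- a smooth Hermitian metric `h` on a (possibly infinite-rank) trivial
Hilbert bundle `U × H`, with `h(0) = Id`, agrees with the flat metric up to first order:
for `h_j = (∂h/∂z_j)(0)` and the modified frames `ẽ_λ(z) = e_λ − ∑_j z_j h_j(e_λ)` one
has `(ẽ_λ, ẽ_μ)_z = δ_{λμ} + O(‖z‖²)` with a bound uniform in `λ, μ`. -/
theorem hermitian_metric_normal_frame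
    {H : Type*} [NormedAddCommGroup H] [InnerProductSpace ℂ H] [CompleteSpace H]
    {ι : Type*} [DecidableEq ι] (b : HilbertBasis ι ℂ H)
    {n : ℕ} (h : EuclideanSpace ℂ (Fin n) → (H →L[ℂ] H))
    (hsmooth : ContDiff ℝ (⊤ : ℕ∞) h)
    (hid : h 0 = ContinuousLinearMap.id ℂ H)
    (hsa : ∀ z, IsSelfAdjoint (h z))
    (δ : EuclideanSpace ℂ (Fin n) → ℝ) (hδcont : Continuous δ) (hδpos : ∀ z, 0 < δ z)
    (hlb : ∀ z (v : H), δ z * ‖v‖ ^ 2 ≤ ((inner ℂ ((h z) v) v : ℂ)).re) :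
    ∃ C > (0 : ℝ), ∃ ε > (0 : ℝ), ∀ z : EuclideanSpace ℂ (Fin n), ‖z‖ < ε →
      ∀ l m : ι,
        ‖(inner ℂ ((h z) (b l - ∑ j, z j •
            ((1 / 2 : ℂ) • (fderiv ℝ h 0 (EuclideanSpace.single j 1) -
              Complex.I • fderiv ℝ h 0 (EuclideanSpace.single j Complex.I))) (b l)))
          (b m - ∑ j, z j •
            ((1 / 2 : ℂ) • (fderiv ℝ h 0 (EuclideanSpace.single j 1) -
              Complex.I • fderiv ℝ h 0 (EuclideanSpace.single j Complex.I))) (b m)) : ℂ) -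
          (if l = m then 1 else 0)‖ ≤ C * ‖z‖ ^ 2 := by
  classical
  have hdiff : Differentiable ℝ h := hsmooth.differentiable (by simp)
  set D : EuclideanSpace ℂ (Fin n) →L[ℝ] (H →L[ℂ] H) := fderiv ℝ h 0 with hDdef
  -- Step A : star (D v) = D v
  have hstarD : ∀ v, star (D v) = D v := by
    intro v
    have h1 : HasFDerivAt h D 0 := (hdiff 0).hasFDerivAt
    have h2 := ((starL' ℝ (A := H →L[ℂ] H)).toContinuousLinearMap.hasFDerivAt
        (x := h 0)).comp 0 h1
    have h3 : ⇑(starL' ℝ (A := H →L[ℂ] H)).toContinuousLinearMap ∘ h = h := by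
      funext z; simpa using (hsa z).star_eq
    rw [h3] at h2
    have h4 := h1.unique h2
    have := congrArg (fun (T : EuclideanSpace ℂ (Fin n) →L[ℝ] (H →L[ℂ] H)) => T v) h4
    simpa using this.symm
  -- abbreviations
  set hj : Fin n → (H →L[ℂ] H) := fun j =>
    (1 / 2 : ℂ) • (D (EuclideanSpace.single j 1) -
      Complex.I • D (EuclideanSpace.single j Complex.I)) with hhj
  set A : EuclideanSpace ℂ (Fin n) → (H →L[ℂ] H) := fun z => ∑ j, z j • hj j with hA
  -- star of hj
  have hstarhj : ∀ j, star (hj j) = (1 / 2 : ℂ) • (D (EuclideanSpace.single j 1) +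
      Complex.I • D (EuclideanSpace.single j Complex.I)) := by
    intro j
    rw [hhj]
    rw [star_smul, star_sub, star_smul, hstarD, hstarD]
    simp [sub_neg_eq_add]
  -- D z = A z + star (A z)
  have hDA : ∀ z : EuclideanSpace ℂ (Fin n), D z = A z + star (A z) := by
    intro z
    have hzsum : z = ∑ j, (EuclideanSpace.single j (z j) : EuclideanSpace ℂ (Fin n)) := by
      ext i
      rw [aux_sum_apply]
      simp [EuclideanSpace.single_apply]
    have hsingle : ∀ j, (EuclideanSpace.single j (z j) : EuclideanSpace ℂ (Fin n)) =
        (z j).re • EuclideanSpace.single j (1 : ℂ) +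
        (z j).im • EuclideanSpace.single j Complex.I := by
      intro j
      ext i
      by_cases hij : i = j <;>
        simp [EuclideanSpace.single_apply, hij, Complex.real_smul, Complex.ext_iff]
    have hres : ∀ (r : ℝ) (x : H →L[ℂ] H), (r : ℂ) • x = r • x := by
      intro r x
      rw [← Complex.coe_algebraMap]; exact algebraMap_smul ℂ r x
    have key : ∀ j, z j • hj j + star (z j • hj j) =
        (z j).re • D (EuclideanSpace.single j 1) +
        (z j).im • D (EuclideanSpace.single j Complex.I) := by
      intro j
      rw [star_smul, hstarhj j, hhj]
      rw [aux_smul (z j) (D (EuclideanSpace.single j 1))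
        (D (EuclideanSpace.single j Complex.I)), hres, hres]
    calc D z = D (∑ j, (EuclideanSpace.single j (z j) : EuclideanSpace ℂ (Fin n))) := by
            rw [← hzsum]
      _ = ∑ j, ((z j).re • D (EuclideanSpace.single j 1) +
            (z j).im • D (EuclideanSpace.single j Complex.I)) := by
            rw [map_sum]
            refine Finset.sum_congr rfl fun j _ => ?_
            rw [hsingle j, map_add, map_smul, map_smul]
      _ = ∑ j, (z j • hj j + star (z j • hj j)) := by
            exact (Finset.sum_congr rfl fun j _ => (key j).symm)
      _ = A z + star (A z) := by
            rw [hA]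
            simp [Finset.sum_add_distrib, star_sum]
  -- norm bound for A
  set c : ℝ := ∑ j, ‖hj j‖ with hc
  have hc0 : 0 ≤ c := Finset.sum_nonneg fun j _ => norm_nonneg _
  have hAnorm : ∀ z : EuclideanSpace ℂ (Fin n), ‖A z‖ ≤ c * ‖z‖ := by
    intro z
    have hcoord : ∀ j, ‖z j‖ ≤ ‖z‖ := by
      intro j
      have := norm_inner_le_norm (𝕜 := ℂ) (EuclideanSpace.single j (1:ℂ)) z
      simpa [EuclideanSpace.inner_single_left] using this
    calc ‖A z‖ ≤ ∑ j, ‖z j • hj j‖ := norm_sum_le _ _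
      _ ≤ ∑ j, ‖z‖ * ‖hj j‖ := by
          refine Finset.sum_le_sum fun j _ => ?_
          rw [norm_smul]
          exact mul_le_mul_of_nonneg_right (hcoord j) (norm_nonneg _)
      _ = c * ‖z‖ := by
          rw [hc, Finset.sum_mul]
          exact Finset.sum_congr rfl fun j _ => mul_comm _ _
  -- Taylor remainder
  have hC1 : ContDiff ℝ 1 (fun y => fderiv ℝ h y) := hsmooth.fderiv_right (by exact WithTop.coe_le_coe.mpr le_top)
  obtain ⟨K, t, ht, hlip⟩ := hC1.contDiffAt (x := 0).exists_lipschitzOnWith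
  obtain ⟨r, hr0, hrt⟩ := Metric.mem_nhds_iff.mp ht
  have htaylor : ∀ z : EuclideanSpace ℂ (Fin n), ‖z‖ < r →
      ‖h z - h 0 - D z‖ ≤ (K : ℝ) * ‖z‖ ^ 2 := by
    intro z hz
    have hsub : Metric.closedBall (0 : EuclideanSpace ℂ (Fin n)) ‖z‖ ⊆ t := by
      intro x hx
      apply hrt
      rw [Metric.mem_closedBall] at hx
      rw [Metric.mem_ball]
      exact lt_of_le_of_lt hx hz
    have bound : ∀ x ∈ Metric.closedBall (0 : EuclideanSpace ℂ (Fin n)) ‖z‖,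
        ‖fderiv ℝ h x - D‖ ≤ (K : ℝ) * ‖z‖ := by
      intro x hx
      have h0t : (0 : EuclideanSpace ℂ (Fin n)) ∈ t := hrt (Metric.mem_ball_self hr0)
      have := hlip.dist_le_mul x (hsub hx) 0 h0t
      rw [dist_eq_norm, dist_eq_norm, sub_zero] at this
      refine this.trans ?_
      have hxn : ‖x‖ ≤ ‖z‖ := by simpa using Metric.mem_closedBall.mp hx
      exact mul_le_mul_of_nonneg_left hxn K.2
    have hmem0 : (0 : EuclideanSpace ℂ (Fin n)) ∈
        Metric.closedBall (0 : EuclideanSpace ℂ (Fin n)) ‖z‖ :=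
      Metric.mem_closedBall_self (norm_nonneg z)
    have hmemz : z ∈ Metric.closedBall (0 : EuclideanSpace ℂ (Fin n)) ‖z‖ := by
      rw [Metric.mem_closedBall, dist_zero_right]
    have := Convex.norm_image_sub_le_of_norm_fderiv_le'
      (f := h) (φ := D) (s := Metric.closedBall (0 : EuclideanSpace ℂ (Fin n)) ‖z‖)
      (x := 0) (y := z)
      (fun x _ => hdiff x) bound (convex_closedBall _ _) hmem0 hmemz
    rw [sub_zero] at this
    calc ‖h z - h 0 - D z‖ ≤ (K : ℝ) * ‖z‖ * ‖z‖ := this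
      _ = (K : ℝ) * ‖z‖ ^ 2 := by ring
  -- choose constants
  refine ⟨(K : ℝ) * (1 + c) ^ 2 + 5 * c ^ 2 + 2 * c ^ 3 + 1, by positivity, min r 1,
    lt_min hr0 one_pos, ?_⟩
  intro z hz l m
  have hz1 : ‖z‖ ≤ 1 := le_of_lt (lt_of_lt_of_le hz (min_le_right _ _))
  have hzr : ‖z‖ < r := lt_of_lt_of_le hz (min_le_left _ _)
  set S : H →L[ℂ] H := 1 - A z with hS
  set Ez : H →L[ℂ] H := h z - 1 - D z with hEz
  have hEnorm : ‖Ez‖ ≤ (K : ℝ) * ‖z‖ ^ 2 := by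
    have := htaylor z hzr
    rw [hid] at this
    simpa [hEz, hid, ContinuousLinearMap.one_def] using this
  have hhz : h z = 1 + (A z + star (A z)) + Ez := by
    rw [hEz, ← hDA z]; abel
  -- operator norm bound
  have hBnorm : ‖star S * h z * S - 1‖ ≤
      ((K : ℝ) * (1 + c) ^ 2 + 5 * c ^ 2 + 2 * c ^ 3 + 1) * ‖z‖ ^ 2 := by
    have hrw : star S * h z * S - 1 =
        (1 - star (A z)) * (1 + (A z + star (A z)) + Ez) * (1 - A z) - 1 := by
      rw [hS, hhz, star_sub, star_one]
    rw [hrw]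
    refine (aux_bound (A z) Ez (c * ‖z‖) ((K : ℝ) * ‖z‖ ^ 2) (hAnorm z) hEnorm
      ContinuousLinearMap.norm_id_le).trans ?_
    exact aux_real c (K : ℝ) ‖z‖ hc0 K.2 (norm_nonneg z) hz1
  -- the modified frame is S applied to the basis
  have hSapply : ∀ x : H, S x = x - ∑ j, z j • (hj j) x := by
    intro x
    rw [hS]
    rw [ContinuousLinearMap.sub_apply, ContinuousLinearMap.one_apply, hA]
    simp [ContinuousLinearMap.sum_apply]
  -- rewrite the inner product
  have hinner : ∀ x y : H,
      (inner ℂ ((h z) (S x)) (S y) : ℂ) = inner ℂ x ((star S * h z * S) y) := by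
    intro x y
    calc (inner ℂ ((h z) (S x)) (S y) : ℂ) = inner ℂ (S x) ((h z) (S y)) :=
          (hsa z).isSymmetric (S x) (S y)
      _ = inner ℂ x ((ContinuousLinearMap.adjoint S) ((h z) (S y))) :=
          (ContinuousLinearMap.adjoint_inner_right S x ((h z) (S y))).symm
      _ = inner ℂ x ((star S * h z * S) y) := by
          rw [ContinuousLinearMap.star_eq_adjoint]
          rfl
  have hortho := orthonormal_iff_ite.mp b.orthonormal (i := l) (j := m)
  have hbl : ‖b l‖ = 1 := b.orthonormal.1 l
  have hbm : ‖b m‖ = 1 := b.orthonormal.1 m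
  calc ‖(inner ℂ ((h z) (b l - ∑ j, z j • (hj j) (b l)))
          (b m - ∑ j, z j • (hj j) (b m)) : ℂ) - (if l = m then 1 else 0)‖
      = ‖(inner ℂ (b l) ((star S * h z * S - 1) (b m)) : ℂ)‖ := by
        rw [← hSapply (b l), ← hSapply (b m), hinner, ← hortho]
        congr 1
        rw [ContinuousLinearMap.sub_apply, inner_sub_right]
        simp
    _ ≤ ‖b l‖ * ‖(star S * h z * S - 1) (b m)‖ := norm_inner_le_norm _ _
    _ ≤ ‖star S * h z * S - 1‖ := by
        rw [hbl, one_mul]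
        calc ‖(star S * h z * S - 1) (b m)‖ ≤ ‖star S * h z * S - 1‖ * ‖b m‖ :=
              ContinuousLinearMap.le_opNorm _ _
          _ = ‖star S * h z * S - 1‖ := by rw [hbm, mul_one]
    _ ≤ ((K : ℝ) * (1 + c) ^ 2 + 5 * c ^ 2 + 2 * c ^ 3 + 1) * ‖z‖ ^ 2 := hBnorm
end
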